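/- The integer space 3^A is closed under fusion: for a σ-set A and any M, N ∈ 3^A, the fusion M ⊕ N is again in 3^A. -/
import Mathlib


variable {α : Type*} [DecidableEq α]

/-- The *-intersection: `A ∗∩ B = {x ∈ A : star x ∈ B}`. -/
def sInter (star : α → α) (A B : Finset α) : Finset α :=
  A.filter (fun x => star x ∈ B)

/-- The *-difference: `A ∗ B = A \ (A ∗∩ B)`. -/
def sDiff (star : α → α) (A B : Finset α) : Finset α :=
  A \ sInter star A B

/-- The fusion: `A ⊕ B = (A ∗ B) ∪ (B ∗ A)`. -/
def fusion (star : α → α) (A B : Finset α) : Finset α :=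
  sDiff star A B ∪ sDiff star B A

/-- A σ-set: never contains an element together with its anti-element. -/
def IsSigmaSet (star : α → α) (A : Finset α) : Prop :=
  ∀ x ∈ A, star x ∉ A

/-- The generated space `⟨2^A, 2^B⟩ = {X ⊕ Y : X ⊆ A, Y ⊆ B}`. -/
def genSpace (star : α → α) (A B : Finset α) : Finset (Finset α) :=
  (A.powerset ×ˢ B.powerset).image (fun p => fusion star p.1 p.2)

lemma mem_fusion (star : α → α) (X Y : Finset α) (x : α) :
    x ∈ fusion star X Y ↔ (x ∈ X ∧ star x ∉ Y) ∨ (x ∈ Y ∧ star x ∉ X) := by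
  simp [fusion, sDiff, sInter, Finset.mem_union, Finset.mem_sdiff, Finset.mem_filter]
  tauto

lemma sigma_fusion (star : α → α) {X Y : Finset α} (hX : IsSigmaSet star X)
    (hY : IsSigmaSet star Y) : IsSigmaSet star (fusion star X Y) := by
  intro x hx hsx
  rw [mem_fusion] at hx hsx
  rcases hx with ⟨h1, h2⟩ | ⟨h1, h2⟩ <;> rcases hsx with ⟨h3, h4⟩ | ⟨h3, h4⟩
  · exact hX x h1 h3
  · exact h2 h3
  · exact h2 h3
  · exact hY x h1 h3

lemma mem_genSpace (star : α → α) (hinv : Function.Involutive star)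
    (A : Finset α) (hA : IsSigmaSet star A) (S : Finset α) :
    S ∈ genSpace star A (A.image star) ↔
      S ⊆ A ∪ A.image star ∧ IsSigmaSet star S := by
  have hAi : IsSigmaSet star (A.image star) := by
    intro x hx hsx
    simp only [Finset.mem_image] at hx hsx
    obtain ⟨a, ha, hax⟩ := hx
    obtain ⟨b, hb, hbx⟩ := hsx
    have hxb : x = b := by
      have := congrArg star hbx
      rw [hinv, hinv] at this
      exact this.symm
    subst hxb
    have hab : a = star x := by
      have := congrArg star hax
      rwa [hinv] at this
    subst hab
    exact hA _ hb ha
  constructor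
  · rintro h
    simp only [genSpace, Finset.mem_image, Finset.mem_product, Finset.mem_powerset] at h
    obtain ⟨⟨X, Y⟩, ⟨hX, hY⟩, rfl⟩ := h
    constructor
    · intro x hx
      rw [mem_fusion] at hx
      rcases hx with ⟨h1, _⟩ | ⟨h1, _⟩
      · exact Finset.mem_union_left _ (hX h1)
      · exact Finset.mem_union_right _ (hY h1)
    · exact sigma_fusion star (fun x hx => hA x (hX hx) ∘ fun h => hX h)
        (fun x hx => hAi x (hY hx) ∘ fun h => hY h)
  · rintro ⟨hsub, hsig⟩
    simp only [genSpace, Finset.mem_image, Finset.mem_product, Finset.mem_powerset]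
    refine ⟨(S ∩ A, S ∩ A.image star), ⟨Finset.inter_subset_right, Finset.inter_subset_right⟩, ?_⟩
    apply Finset.ext
    intro x
    rw [mem_fusion]
    simp only [Finset.mem_inter]
    constructor
    · rintro (⟨⟨h1, _⟩, _⟩ | ⟨⟨h1, _⟩, _⟩) <;> exact h1
    · intro hx
      have hsx : star x ∉ S := hsig x hx
      rcases Finset.mem_union.mp (hsub hx) with h | h
      · exact Or.inl ⟨⟨hx, h⟩, fun hc => hsx hc.1⟩
      · exact Or.inr ⟨⟨hx, h⟩, fun hc => hsx hc.1⟩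

theorem stmt_13 (star : α → α) (hinv : Function.Involutive star)
    (hne : ∀ x, star x ≠ x) (A : Finset α) (hA : IsSigmaSet star A)
    (M N : Finset α) (hM : M ∈ genSpace star A (A.image star))
    (hN : N ∈ genSpace star A (A.image star)) :
    fusion star M N ∈ genSpace star A (A.image star) := by
  rw [mem_genSpace star hinv A hA] at hM hN ⊢
  obtain ⟨hMs, hMσ⟩ := hM
  obtain ⟨hNs, hNσ⟩ := hN
  refine ⟨?_, sigma_fusion star hMσ hNσ⟩
  intro x hx
  rw [mem_fusion] at hx
  rcases hx with ⟨h1, _⟩ | ⟨h1, _⟩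
  · exact hMs h1
  · exact hNs h1
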